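/- For all θ ∈ ℝ and all μ, ν ∈ {−1,+1}, the expectation value of the interaction term in the normalized post-measurement state satisfies Tr[ρ(μ,ν,θ)·V] = (2k/√(h²+k²))·[−μν·h·sin 2θ + k·(1 − cos 2θ)]. -/

import Mathlib

/-!
Bob's unitary `UB ν θ = cos θ - iν sin θ Y₂` is `exp(-iνθY₂)`, and `Y₂` anticommutes with `X⊗X`,
so `UB† (X⊗X) UB = UB ν (-2θ) (X⊗X)`. Alice's projector `PA μ` commutes with `Y₂` and `X⊗X`, hence
`Tr[ρV] = 2⟨g| PA μ (2k·UB ν (-2θ)(X⊗X) + 2k²/r) |g⟩`. For `g = a|00⟩ - b|11⟩` only four matrix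
entries enter, and `a² + b² = 1`, `b² - a² = h/r`, `ab = k/(2r)` give the formula.
-/

open Matrix Kronecker
open scoped ComplexOrder

noncomputable section

abbrev M2 : Type := Matrix (Fin 2) (Fin 2) ℂ
abbrev M4 : Type := Matrix (Fin 2 × Fin 2) (Fin 2 × Fin 2) ℂ

/-- Pauli X matrix. -/
def σx : M2 := !![0, 1; 1, 0]
/-- Pauli Y matrix. -/
def σy : M2 := !![0, -Complex.I; Complex.I, 0]
/-- Pauli Z matrix. -/
def σz : M2 := !![1, 0; 0, -1]

def X1 : M4 := σx ⊗ₖ (1 : M2)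
def Z1 : M4 := σz ⊗ₖ (1 : M2)
def Z2 : M4 := (1 : M2) ⊗ₖ σz
def Y2 : M4 := (1 : M2) ⊗ₖ σy
def XX : M4 := σx ⊗ₖ σx

def H1m (k h : ℝ) : M4 := (h : ℂ) • Z1 + ((h ^ 2 / Real.sqrt (h ^ 2 + k ^ 2) : ℝ) : ℂ) • (1 : M4)
def H2m (k h : ℝ) : M4 := (h : ℂ) • Z2 + ((h ^ 2 / Real.sqrt (h ^ 2 + k ^ 2) : ℝ) : ℂ) • (1 : M4)
def Vm (k h : ℝ) : M4 :=
  ((2 * k : ℝ) : ℂ) • XX + ((2 * k ^ 2 / Real.sqrt (h ^ 2 + k ^ 2) : ℝ) : ℂ) • (1 : M4)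
def Hm (k h : ℝ) : M4 := H1m k h + H2m k h + Vm k h

def e00 : (Fin 2 × Fin 2) → ℂ := fun p => if p = (0, 0) then 1 else 0
def e11 : (Fin 2 × Fin 2) → ℂ := fun p => if p = (1, 1) then 1 else 0

/-- the ground state of the minimal QET Hamiltonian -/
def gs (k h : ℝ) : (Fin 2 × Fin 2) → ℂ := fun p =>
  ((1 / Real.sqrt 2 * Real.sqrt (1 - h / Real.sqrt (h ^ 2 + k ^ 2)) : ℝ) : ℂ) * e00 p
  - ((1 / Real.sqrt 2 * Real.sqrt (1 + h / Real.sqrt (h ^ 2 + k ^ 2)) : ℝ) : ℂ) * e11 p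

/-- the rank-one operator |g⟩⟨g| -/
def gProj (k h : ℝ) : M4 := Matrix.vecMulVec (gs k h) (star (gs k h))

/-- Alice's projective measurement operator -/
def PA (μ : ℝ) : M4 := (2 : ℂ)⁻¹ • ((1 : M4) + (μ : ℂ) • X1)

/-- Bob's conditional unitary -/
def UB (ν θ : ℝ) : M4 :=
  ((Real.cos θ : ℝ) : ℂ) • (1 : M4) - ((Complex.I * ν * Real.sin θ) : ℂ) • Y2

/-- the post-protocol state -/
def ρQET (k h θ : ℝ) : M4 :=
  UB (-1) θ * PA (-1) * gProj k h * PA (-1) * (UB (-1) θ)ᴴ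
  + UB 1 θ * PA 1 * gProj k h * PA 1 * (UB 1 θ)ᴴ

/-- the normalized post-measurement state with prover outcome μ and verifier operation UB ν θ -/
def ρMN (k h μ ν θ : ℝ) : M4 := (2 : ℂ) • (UB ν θ * PA μ * gProj k h * PA μ * (UB ν θ)ᴴ)

lemma σx_mul_σx : σx * σx = 1 := by
  ext i j; fin_cases i <;> fin_cases j <;> simp [σx]

lemma σy_mul_σy : σy * σy = 1 := by
  ext i j; fin_cases i <;> fin_cases j <;> simp [σy]

lemma σx_mul_σy_add_σy_mul_σx : σx * σy + σy * σx = 0 := by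
  ext i j; fin_cases i <;> fin_cases j <;> simp [σx, σy]

lemma σy_isHermitian : σy.IsHermitian := by
  ext i j; fin_cases i <;> fin_cases j <;> simp [σy]

lemma X1_mul_X1 : X1 * X1 = 1 := by
  rw [X1, ← mul_kronecker_mul, σx_mul_σx, Matrix.one_mul, one_kronecker_one]

lemma Y2_mul_Y2 : Y2 * Y2 = 1 := by
  rw [Y2, ← mul_kronecker_mul, σy_mul_σy, Matrix.one_mul, one_kronecker_one]

lemma Y2_isHermitian : Y2.IsHermitian := by
  rw [Y2, IsHermitian, conjTranspose_kronecker, conjTranspose_one, σy_isHermitian.eq]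

lemma XX_mul_Y2 : XX * Y2 = -(Y2 * XX) := by
  refine eq_neg_of_add_eq_zero_left ?_
  rw [XX, Y2, ← mul_kronecker_mul, ← mul_kronecker_mul, Matrix.mul_one, Matrix.one_mul,
    ← kronecker_add, σx_mul_σy_add_σy_mul_σx, kronecker_zero]

lemma commute_X1_XX : Commute X1 XX := by
  rw [Commute, SemiconjBy, X1, XX, ← mul_kronecker_mul, ← mul_kronecker_mul,
    Matrix.one_mul, Matrix.mul_one]

lemma commute_X1_Y2 : Commute X1 Y2 := by
  rw [Commute, SemiconjBy, X1, Y2, ← mul_kronecker_mul, ← mul_kronecker_mul,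
    Matrix.one_mul, Matrix.mul_one, Matrix.one_mul, Matrix.mul_one]

lemma UB_mul_UB {ν : ℝ} (hν : ν ^ 2 = 1) (α β : ℝ) : UB ν α * UB ν β = UB ν (α + β) := by
  have hν' : (ν : ℂ) ^ 2 = 1 := by exact_mod_cast hν
  simp only [UB, sub_mul, mul_sub, smul_mul_smul_comm, Matrix.one_mul, Matrix.mul_one,
    Y2_mul_Y2, Real.cos_add, Real.sin_add]
  push_cast
  match_scalars
  · linear_combination (↑ν ^ 2 * Complex.sin α * Complex.sin β) * Complex.I_sq
      - Complex.sin α * Complex.sin β * hν'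
  · ring

lemma UB_zero (ν : ℝ) : UB ν 0 = 1 := by
  simp [UB]

lemma conjTranspose_UB (ν θ : ℝ) : (UB ν θ)ᴴ = UB ν (-θ) := by
  simp only [UB, conjTranspose_sub, conjTranspose_smul, conjTranspose_one, Y2_isHermitian.eq,
    Real.cos_neg, Real.sin_neg, star_mul', Complex.star_def, Complex.conj_ofReal,
    Complex.conj_I]
  match_scalars <;> ring

lemma XX_mul_UB (ν θ : ℝ) : XX * UB ν θ = UB ν (-θ) * XX := by
  simp only [UB, mul_sub, sub_mul, Matrix.mul_smul, Matrix.smul_mul, Matrix.mul_one,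
    Matrix.one_mul, XX_mul_Y2, Real.cos_neg, Real.sin_neg]
  push_cast
  module

lemma commute_PA_XX (μ : ℝ) : Commute (PA μ) XX := by
  unfold PA
  exact ((Commute.one_left _).add_left (commute_X1_XX.smul_left _)).smul_left _

lemma commute_PA_UB (μ ν θ : ℝ) : Commute (PA μ) (UB ν θ) := by
  have : Commute X1 (UB ν θ) :=
    ((Commute.one_right _).smul_right _).sub_right (commute_X1_Y2.smul_right _)
  unfold PA
  exact ((Commute.one_left _).add_left (this.smul_left _)).smul_left _

lemma PA_mul_PA {μ : ℝ} (hμ : μ ^ 2 = 1) : PA μ * PA μ = PA μ := by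
  have hμ' : (μ : ℂ) ^ 2 = 1 := by exact_mod_cast hμ
  simp only [PA, Matrix.smul_mul, Matrix.mul_smul, add_mul, mul_add, Matrix.one_mul,
    Matrix.mul_one, X1_mul_X1]
  match_scalars
  · linear_combination (4⁻¹ : ℂ) * hμ'
  · ring

lemma PA_mul_mul_PA {μ : ℝ} (hμ : μ ^ 2 = 1) {N : M4} (hN : Commute (PA μ) N) :
    PA μ * N * PA μ = PA μ * N := by
  rw [Matrix.mul_assoc, ← hN.eq, ← Matrix.mul_assoc, PA_mul_PA hμ]

lemma conjTranspose_UB_mul_UB {ν : ℝ} (hν : ν ^ 2 = 1) (θ : ℝ) : (UB ν θ)ᴴ * UB ν θ = 1 := by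
  rw [conjTranspose_UB, UB_mul_UB hν, neg_add_cancel, UB_zero]

lemma conjTranspose_UB_mul_XX_mul_UB {ν : ℝ} (hν : ν ^ 2 = 1) (θ : ℝ) :
    (UB ν θ)ᴴ * XX * UB ν θ = UB ν (-(2 * θ)) * XX := by
  rw [conjTranspose_UB, Matrix.mul_assoc, XX_mul_UB, ← Matrix.mul_assoc, UB_mul_UB hν,
    two_mul, neg_add]

lemma conjTranspose_UB_mul_Vm_mul_UB {ν : ℝ} (hν : ν ^ 2 = 1) (k h θ : ℝ) :
    (UB ν θ)ᴴ * Vm k h * UB ν θ = ((2 * k : ℝ) : ℂ) • (UB ν (-(2 * θ)) * XX)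
      + ((2 * k ^ 2 / Real.sqrt (h ^ 2 + k ^ 2) : ℝ) : ℂ) • 1 := by
  rw [Vm, Matrix.mul_add, Matrix.add_mul, Matrix.mul_smul, Matrix.smul_mul, Matrix.mul_smul,
    Matrix.smul_mul, Matrix.mul_one, conjTranspose_UB_mul_XX_mul_UB hν,
    conjTranspose_UB_mul_UB hν]

lemma trace_vecMulVec_star_mul {n R : Type*} [Fintype n] [CommRing R] [StarRing R]
    (x : n → R) (A : Matrix n n R) : (vecMulVec x (star x) * A).trace = star x ⬝ᵥ (A *ᵥ x) := by
  rw [vecMulVec_mul, trace_vecMulVec, dotProduct_comm, dotProduct_mulVec]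

lemma trace_ρMN_mul (k h μ ν θ : ℝ) (M : M4) :
    (ρMN k h μ ν θ * M).trace
      = 2 * (star (gs k h) ⬝ᵥ ((PA μ * ((UB ν θ)ᴴ * M * UB ν θ) * PA μ) *ᵥ gs k h)) := by
  rw [ρMN, Matrix.smul_mul, trace_smul, smul_eq_mul, ← trace_vecMulVec_star_mul, ← gProj,
    show UB ν θ * PA μ * gProj k h * PA μ * (UB ν θ)ᴴ * M
      = (UB ν θ * PA μ) * (gProj k h * (PA μ * (UB ν θ)ᴴ * M)) by simp only [Matrix.mul_assoc],
    trace_mul_comm]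
  simp only [Matrix.mul_assoc]

section Expectation

variable (a b : ℝ)

local notation "ψ" => fun p => (a : ℂ) * e00 p - (b : ℂ) * e11 p

lemma star_dotProduct_mulVec_ψ (M : M4) :
    star ψ ⬝ᵥ (M *ᵥ ψ) = a ^ 2 * M (0, 0) (0, 0) - a * b * (M (0, 0) (1, 1) + M (1, 1) (0, 0))
      + b ^ 2 * M (1, 1) (1, 1) := by
  simp only [dotProduct, e00, mul_ite, mul_one, mul_zero, e11, Pi.star_apply, star_sub,
    RCLike.star_def, mulVec, Fintype.sum_prod_type, Prod.mk.injEq, Fin.sum_univ_two, and_true,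
    zero_ne_one, and_false, ↓reduceIte, sub_zero, one_ne_zero, zero_sub, mul_neg, neg_zero,
    add_zero, zero_add, map_zero, neg_mul, Complex.conj_ofReal, zero_mul]
  ring

lemma star_dotProduct_PA_mulVec (μ : ℝ) :
    star ψ ⬝ᵥ (PA μ *ᵥ ψ) = (((a ^ 2 + b ^ 2) / 2 : ℝ) : ℂ) := by
  rw [star_dotProduct_mulVec_ψ]
  simp only [PA, X1, σx, Complex.coe_smul, Matrix.smul_apply, Matrix.add_apply, one_apply,
    ↓reduceIte, kroneckerMap_apply, of_apply, cons_val', cons_val_zero, cons_val_fin_one, mul_one,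
    smul_zero, add_zero, smul_eq_mul, Prod.mk.injEq, zero_ne_one, and_self, cons_val_one,
    mul_zero, one_ne_zero, sub_zero, Complex.ofReal_div, Complex.ofReal_add, Complex.ofReal_pow,
    Complex.ofReal_ofNat]
  ring

lemma star_dotProduct_PA_mul_UB_mul_XX_mulVec (μ ν φ : ℝ) :
    star ψ ⬝ᵥ ((PA μ * (UB ν φ * XX)) *ᵥ ψ)
      = ((μ * ν * Real.sin φ * (b ^ 2 - a ^ 2) / 2 - a * b * Real.cos φ : ℝ) : ℂ) := by
  rw [star_dotProduct_mulVec_ψ]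
  simp only [PA, X1, σx, Complex.coe_smul, smul_add, UB, Complex.ofReal_cos, Complex.ofReal_sin,
    Y2, σy, XX, mul_apply, Matrix.add_apply, Matrix.smul_apply, one_apply, smul_eq_mul, mul_ite,
    mul_one, mul_zero, kroneckerMap_apply, of_apply, cons_val', cons_val_fin_one, cons_val_zero,
    smul_ite, Complex.real_smul, smul_zero, Matrix.sub_apply, ite_mul, one_mul, zero_mul,
    Fintype.sum_prod_type, Fin.sum_univ_two, cons_val_one, zero_add, Prod.mk.injEq, and_true,
    ↓reduceIte, zero_ne_one, and_false, mul_neg, zero_sub, add_zero, ite_self, sub_zero,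
    Finset.sum_neg_distrib, Finset.sum_ite_eq', Finset.mem_univ, neg_neg, one_ne_zero, neg_zero,
    Complex.ofReal_sub, Complex.ofReal_div, Complex.ofReal_mul, Complex.ofReal_pow,
    Complex.ofReal_ofNat]
  linear_combination (μ * ν * Complex.sin φ * (a ^ 2 - b ^ 2) / 2) * Complex.I_sq

end Expectation

lemma abs_div_sqrt_sq_add_sq_le_one (h k : ℝ) : |h / Real.sqrt (h ^ 2 + k ^ 2)| ≤ 1 := by
  rw [abs_div, abs_of_nonneg (Real.sqrt_nonneg _)]
  exact div_le_one_of_le₀ (Real.abs_le_sqrt (by nlinarith)) (Real.sqrt_nonneg _)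

lemma one_div_sqrt_two_mul_sqrt_sq {x : ℝ} (hx : 0 ≤ x) :
    (1 / Real.sqrt 2 * Real.sqrt x) ^ 2 = x / 2 := by
  rw [mul_pow, div_pow, Real.sq_sqrt zero_le_two, Real.sq_sqrt hx]
  ring

lemma gs_amplitudes_mul {h k : ℝ} (hk : 0 < k) :
    1 / Real.sqrt 2 * Real.sqrt (1 - h / Real.sqrt (h ^ 2 + k ^ 2))
        * (1 / Real.sqrt 2 * Real.sqrt (1 + h / Real.sqrt (h ^ 2 + k ^ 2)))
      = k / (2 * Real.sqrt (h ^ 2 + k ^ 2)) := by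
  have hr : 0 < Real.sqrt (h ^ 2 + k ^ 2) := Real.sqrt_pos.mpr (by positivity)
  have hr2 : Real.sqrt (h ^ 2 + k ^ 2) ^ 2 = h ^ 2 + k ^ 2 := Real.sq_sqrt (by positivity)
  have ht := abs_le.mp (abs_div_sqrt_sq_add_sq_le_one h k)
  have hprod : (1 - h / Real.sqrt (h ^ 2 + k ^ 2)) * (1 + h / Real.sqrt (h ^ 2 + k ^ 2))
      = (k / Real.sqrt (h ^ 2 + k ^ 2)) ^ 2 := by
    field_simp
    linear_combination hr2
  rw [mul_mul_mul_comm, ← Real.sqrt_mul (by linarith), hprod, Real.sqrt_sq (div_pos hk hr).le,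
    one_div_mul_one_div, Real.mul_self_sqrt zero_le_two]
  ring

theorem qet_V_expectation_mu_nu_general (k h : ℝ) (hk : 0 < k) (θ : ℝ)
    (μ ν : ℝ) (hμ : μ ∈ ({-1, 1} : Set ℝ)) (hν : ν ∈ ({-1, 1} : Set ℝ)) :
    (ρMN k h μ ν θ * Vm k h).trace =
      ((2 * k / Real.sqrt (h ^ 2 + k ^ 2) *
        (-(μ * ν * h) * Real.sin (2 * θ) + k * (1 - Real.cos (2 * θ))) : ℝ) : ℂ) := by
  have hμ2 : μ ^ 2 = 1 := by rcases hμ with rfl | rfl <;> norm_num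
  have hν2 : ν ^ 2 = 1 := by rcases hν with rfl | rfl <;> norm_num
  have hcomm : Commute (PA μ) (((2 * k : ℝ) : ℂ) • (UB ν (-(2 * θ)) * XX)
      + ((2 * k ^ 2 / Real.sqrt (h ^ 2 + k ^ 2) : ℝ) : ℂ) • 1) :=
    (((commute_PA_UB μ ν _).mul_right (commute_PA_XX μ)).smul_right _).add_right
      ((Commute.one_right _).smul_right _)
  rw [trace_ρMN_mul, conjTranspose_UB_mul_Vm_mul_UB hν2, PA_mul_mul_PA hμ2 hcomm,
    Matrix.mul_add, Matrix.mul_smul, Matrix.mul_smul, Matrix.mul_one, add_mulVec, smul_mulVec,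
    smul_mulVec, dotProduct_add, dotProduct_smul, dotProduct_smul]
  unfold gs
  rw [star_dotProduct_PA_mul_UB_mul_XX_mulVec, star_dotProduct_PA_mulVec]
  have ht := abs_le.mp (abs_div_sqrt_sq_add_sq_le_one h k)
  rw [one_div_sqrt_two_mul_sqrt_sq (by linarith), one_div_sqrt_two_mul_sqrt_sq (by linarith),
    gs_amplitudes_mul hk, Real.sin_neg, Real.cos_neg]
  push_cast
  ring

/-- `Tr[ρ(μ,ν,θ)·V] = (2k/√(h²+k²))·[−μν·h·sin 2θ + k·(1 − cos 2θ)]`. -/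
theorem qet_V_expectation_mu_nu (k h : ℝ) (hk : 0 < k) (hh : 0 < h) (θ : ℝ)
    (μ ν : ℝ) (hμ : μ ∈ ({-1, 1} : Set ℝ)) (hν : ν ∈ ({-1, 1} : Set ℝ)) :
    (ρMN k h μ ν θ * Vm k h).trace =
      ((2 * k / Real.sqrt (h ^ 2 + k ^ 2) *
        (-(μ * ν * h) * Real.sin (2 * θ) + k * (1 - Real.cos (2 * θ))) : ℝ) : ℂ) :=
  qet_V_expectation_mu_nu_general k h hk θ μ ν hμ hν
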